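/- arXiv:2101.06836 — 7 statements merged into one kernel-verified Lean document; each statement's English description precedes it below -/
import Mathlib

section
/- Let z₁, z₂ be distinct nonzero complex numbers and a₁, a₂, a₃, b₁, b₂, b₃ complex numbers such that a₁b₂ − b₁a₂ = 0 and the 2×3 matrix with rows (a₁,a₂,a₃) and (b₁,b₂,b₃) has rank 2. Then the two rational functions φ_a(z) = a₁/(z−z₁)² + a₂/(z−z₂)² + a₃ and φ_b(z) = b₁/(z−z₁)² + b₂/(z−z₂)² + b₃ have no common zero in ℂ \ {z₁, z₂}. -/
open Complex

lemma rank_le_one_of_rows_in_span (M : Matrix (Fin 2) (Fin 3) ℂ) (w : Fin 3 → ℂ)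
    (h : ∀ i, M i ∈ Submodule.span ℂ {w}) : M.rank ≤ 1 := by
  rw [Matrix.rank_eq_finrank_span_row]
  have hle : Submodule.span ℂ (Set.range M) ≤ Submodule.span ℂ {w} := by
    rw [Submodule.span_le]
    rintro x ⟨i, rfl⟩
    exact h i
  calc Module.finrank ℂ (Submodule.span ℂ (Set.range M))
      ≤ Module.finrank ℂ (Submodule.span ℂ ({w} : Set (Fin 3 → ℂ))) :=
        Submodule.finrank_mono hle
    _ ≤ 1 := by simpa using finrank_span_le_card ({w} : Set (Fin 3 → ℂ))

lemma key (a₁ a₂ a₃ b₁ b₂ b₃ u v : ℂ)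
    (hdet : a₁ * b₂ - b₁ * a₂ = 0)
    (hrank : (!![a₁, a₂, a₃; b₁, b₂, b₃] : Matrix (Fin 2) (Fin 3) ℂ).rank = 2)
    (ha : a₁ * u + a₂ * v + a₃ = 0) (hb : b₁ * u + b₂ * v + b₃ = 0) : False := by
  set M : Matrix (Fin 2) (Fin 3) ℂ := !![a₁, a₂, a₃; b₁, b₂, b₃] with hM
  have hM0 : M 0 = ![a₁, a₂, a₃] := by
    ext j; fin_cases j <;> simp [hM]
  have hM1 : M 1 = ![b₁, b₂, b₃] := by
    ext j; fin_cases j <;> simp [hM]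
  -- find t such that one row is t times the other
  have hspan : ∃ w : Fin 3 → ℂ, ∀ i, M i ∈ Submodule.span ℂ {w} := by
    by_cases h1 : a₁ = 0 ∧ a₂ = 0
    · -- row a is (0,0,a₃) with a₃ = 0 from ha
      have ha3 : a₃ = 0 := by linear_combination ha - u * h1.1 - v * h1.2
      refine ⟨M 1, Fin.forall_fin_two.mpr ⟨?_, ?_⟩⟩
      · have : M 0 = 0 := by rw [hM0, h1.1, h1.2, ha3]; ext j; fin_cases j <;> simp
        rw [this]; exact Submodule.zero_mem _
      · exact Submodule.mem_span_singleton_self _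
    · push_neg at h1
      -- some of a₁, a₂ nonzero; row b = t • row a
      obtain ⟨t, hb₁, hb₂⟩ : ∃ t, b₁ = t * a₁ ∧ b₂ = t * a₂ := by
        by_cases ha₁ : a₁ = 0
        · have ha₂ := h1 ha₁
          refine ⟨b₂ / a₂, ?_, by field_simp⟩
          have hba : b₁ * a₂ = 0 := by linear_combination -hdet + b₂ * ha₁
          rcases mul_eq_zero.mp hba with h | h
          · rw [h, ha₁, mul_zero]
          · exact absurd h ha₂
        · refine ⟨b₁ / a₁, by field_simp, ?_⟩
          field_simp
          linear_combination hdet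
      have hb₃ : b₃ = t * a₃ := by linear_combination hb - t * ha - u * hb₁ - v * hb₂
      refine ⟨M 0, Fin.forall_fin_two.mpr ⟨?_, ?_⟩⟩
      · exact Submodule.mem_span_singleton_self _
      · rw [hM1, hb₁, hb₂, hb₃, hM0]
        have : (![t * a₁, t * a₂, t * a₃] : Fin 3 → ℂ) = t • ![a₁, a₂, a₃] := by
          ext j; fin_cases j <;> simp
        rw [this, ← hM0]
        exact Submodule.smul_mem _ t (Submodule.mem_span_singleton_self _)
  obtain ⟨w, hw⟩ := hspan
  have := rank_le_one_of_rows_in_span M w hw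
  omega

theorem stmt0 (z₁ z₂ a₁ a₂ a₃ b₁ b₂ b₃ : ℂ)
    (hz₁ : z₁ ≠ 0) (hz₂ : z₂ ≠ 0) (hz : z₁ ≠ z₂)
    (hdet : a₁ * b₂ - b₁ * a₂ = 0)
    (hrank : (!![a₁, a₂, a₃; b₁, b₂, b₃] : Matrix (Fin 2) (Fin 3) ℂ).rank = 2) :
    ∀ z : ℂ, z ≠ z₁ → z ≠ z₂ →
      ¬ (a₁ / (z - z₁) ^ 2 + a₂ / (z - z₂) ^ 2 + a₃ = 0 ∧
         b₁ / (z - z₁) ^ 2 + b₂ / (z - z₂) ^ 2 + b₃ = 0) := by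
  intro z h1 h2 ⟨ha, hb⟩
  exact key a₁ a₂ a₃ b₁ b₂ b₃ (((z - z₁) ^ 2)⁻¹) (((z - z₂) ^ 2)⁻¹) hdet hrank
    (by rw [← ha]; ring) (by rw [← hb]; ring)
end

section
/- Let z₁, z₂ be distinct nonzero complex numbers and a₁, a₂, a₃, b₁, b₂, b₃ complex numbers with a₁b₂ − b₁a₂ = 0 and the matrix [[a₁,a₂,a₃],[b₁,b₂,b₃]] of rank 2. Then the map F : ℂ \ {z₁,z₂} → ℂ² given by F(z) = (−a₁/(z−z₁) − a₂/(z−z₂) + a₃z, −b₁/(z−z₁) − b₂/(z−z₂) + b₃z) is injective. -/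
open Complex

private lemma span_singleton_finrank_le_aux (v : Fin 3 → ℂ) :
    Module.finrank ℂ (Submodule.span ℂ {v}) ≤ 1 := by
  rcases eq_or_ne v 0 with h | h
  · subst h; rw [Submodule.span_zero_singleton]; simp
  · simp [finrank_span_singleton h]

private lemma rank_le_one_aux (a₁ a₂ a₃ b₁ b₂ b₃ : ℂ)
    (h12 : a₁ * b₂ = b₁ * a₂) (h13 : a₁ * b₃ = b₁ * a₃) (h23 : a₂ * b₃ = b₂ * a₃) :
    (!![a₁, a₂, a₃; b₁, b₂, b₃] : Matrix (Fin 2) (Fin 3) ℂ).rank ≤ 1 := by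
  rw [Matrix.rank_eq_finrank_span_row]
  set A : Matrix (Fin 2) (Fin 3) ℂ := !![a₁, a₂, a₃; b₁, b₂, b₃] with hA
  have hA0 : A 0 = ![a₁, a₂, a₃] := by funext j; fin_cases j <;> simp [hA]
  have hA1 : A 1 = ![b₁, b₂, b₃] := by funext j; fin_cases j <;> simp [hA]
  have key : ∃ v : Fin 3 → ℂ, Set.range A ⊆ (Submodule.span ℂ {v} : Submodule ℂ (Fin 3 → ℂ)) := by
    by_cases ha : a₁ = 0 ∧ a₂ = 0 ∧ a₃ = 0
    · refine ⟨![b₁, b₂, b₃], ?_⟩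
      rintro x ⟨i, rfl⟩
      match i with
      | 0 =>
        show A 0 ∈ (Submodule.span ℂ {![b₁, b₂, b₃]} : Submodule ℂ (Fin 3 → ℂ))
        have : A 0 = 0 := by rw [hA0]; funext j; fin_cases j <;> simp [ha.1, ha.2.1, ha.2.2]
        rw [this]; exact Submodule.zero_mem _
      | 1 =>
        show A 1 ∈ (Submodule.span ℂ {![b₁, b₂, b₃]} : Submodule ℂ (Fin 3 → ℂ))
        rw [hA1]; exact Submodule.mem_span_singleton_self _
    · push_neg at ha
      refine ⟨![a₁, a₂, a₃], ?_⟩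
      have hb : ∃ c : ℂ, b₁ = c * a₁ ∧ b₂ = c * a₂ ∧ b₃ = c * a₃ := by
        by_cases h1 : a₁ ≠ 0
        · refine ⟨b₁ / a₁, by field_simp, ?_, ?_⟩
          · rw [div_mul_eq_mul_div, eq_div_iff h1]; linear_combination h12
          · rw [div_mul_eq_mul_div, eq_div_iff h1]; linear_combination h13
        · push_neg at h1
          by_cases h2 : a₂ ≠ 0
          · refine ⟨b₂ / a₂, ?_, by field_simp, ?_⟩
            · rw [div_mul_eq_mul_div, eq_div_iff h2]; linear_combination -h12
            · rw [div_mul_eq_mul_div, eq_div_iff h2]; linear_combination h23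
          · push_neg at h2
            have h3 : a₃ ≠ 0 := ha h1 h2
            refine ⟨b₃ / a₃, ?_, ?_, by field_simp⟩
            · rw [div_mul_eq_mul_div, eq_div_iff h3]; linear_combination -h13
            · rw [div_mul_eq_mul_div, eq_div_iff h3]; linear_combination -h23
      obtain ⟨c, hc1, hc2, hc3⟩ := hb
      rintro x ⟨i, rfl⟩
      match i with
      | 0 =>
        show A 0 ∈ (Submodule.span ℂ {![a₁, a₂, a₃]} : Submodule ℂ (Fin 3 → ℂ))
        rw [hA0]; exact Submodule.mem_span_singleton_self _
      | 1 =>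
        show A 1 ∈ (Submodule.span ℂ {![a₁, a₂, a₃]} : Submodule ℂ (Fin 3 → ℂ))
        have : A 1 = c • ![a₁, a₂, a₃] := by
          rw [hA1]; funext j; fin_cases j <;> simp [hc1, hc2, hc3]
        rw [this]
        exact Submodule.smul_mem _ _ (Submodule.mem_span_singleton_self _)
  obtain ⟨v, hv⟩ := key
  calc Module.finrank ℂ (Submodule.span ℂ (Set.range A))
      ≤ Module.finrank ℂ (Submodule.span ℂ {v}) :=
        Submodule.finrank_mono (Submodule.span_le.mpr hv)
    _ ≤ 1 := span_singleton_finrank_le_aux v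

theorem stmt1 (z₁ z₂ a₁ a₂ a₃ b₁ b₂ b₃ : ℂ)
    (hz₁ : z₁ ≠ 0) (hz₂ : z₂ ≠ 0) (hz : z₁ ≠ z₂)
    (hdet : a₁ * b₂ - b₁ * a₂ = 0)
    (hrank : (!![a₁, a₂, a₃; b₁, b₂, b₃] : Matrix (Fin 2) (Fin 3) ℂ).rank = 2) :
    Set.InjOn (fun z : ℂ =>
        ((-a₁ / (z - z₁) - a₂ / (z - z₂) + a₃ * z,
          -b₁ / (z - z₁) - b₂ / (z - z₂) + b₃ * z) : ℂ × ℂ))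
      {z : ℂ | z ≠ z₁ ∧ z ≠ z₂} := by
  intro z hzm w hwm hF
  by_contra hne
  obtain ⟨hz1, hz2⟩ := hzm
  obtain ⟨hw1, hw2⟩ := hwm
  have dz1 : z - z₁ ≠ 0 := sub_ne_zero.mpr hz1
  have dz2 : z - z₂ ≠ 0 := sub_ne_zero.mpr hz2
  have dw1 : w - z₁ ≠ 0 := sub_ne_zero.mpr hw1
  have dw2 : w - z₂ ≠ 0 := sub_ne_zero.mpr hw2
  have hzw : z - w ≠ 0 := sub_ne_zero.mpr hne
  simp only [Prod.mk.injEq] at hF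
  obtain ⟨e1, e2⟩ := hF
  have E1 : a₁ * ((z-z₂)*(w-z₂)) + a₂ * ((z-z₁)*(w-z₁))
      + a₃ * ((z-z₁)*(w-z₁)*(z-z₂)*(w-z₂)) = 0 := by
    field_simp at e1
    apply mul_left_cancel₀ hzw
    rw [mul_zero]
    linear_combination e1
  have E2 : b₁ * ((z-z₂)*(w-z₂)) + b₂ * ((z-z₁)*(w-z₁))
      + b₃ * ((z-z₁)*(w-z₁)*(z-z₂)*(w-z₂)) = 0 := by
    field_simp at e2
    apply mul_left_cancel₀ hzw
    rw [mul_zero]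
    linear_combination e2
  have hD : (z-z₁)*(w-z₁)*(z-z₂)*(w-z₂) ≠ 0 :=
    mul_ne_zero (mul_ne_zero (mul_ne_zero dz1 dw1) dz2) dw2
  have hdet' : a₁ * b₂ = b₁ * a₂ := by linear_combination hdet
  have h23 : a₂ * b₃ = b₂ * a₃ := by
    have h : (a₂*b₃ - b₂*a₃) * ((z-z₁)*(w-z₁)*(z-z₂)*(w-z₂)) = 0 := by
      linear_combination a₂*E2 - b₂*E1 + ((z-z₂)*(w-z₂))*hdet
    exact sub_eq_zero.mp ((mul_eq_zero.mp h).resolve_right hD)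
  have h13 : a₁ * b₃ = b₁ * a₃ := by
    have h : (a₁*b₃ - b₁*a₃) * ((z-z₁)*(w-z₁)*(z-z₂)*(w-z₂)) = 0 := by
      linear_combination a₁*E2 - b₁*E1 - ((z-z₁)*(w-z₁))*hdet
    exact sub_eq_zero.mp ((mul_eq_zero.mp h).resolve_right hD)
  have hle := rank_le_one_aux a₁ a₂ a₃ b₁ b₂ b₃ hdet' h13 h23
  rw [hrank] at hle
  omega
end

section
/- Let λ₁, …, λ_{2g+2} be pairwise distinct complex numbers and I ⊆ {1,…,2g+2} with |I| ≥ g+1. Define the polynomial H_I(x) = ∏_{j∈I^c}(x−λⱼ) · Σ_{j∈I^c} 1/(x−λⱼ) (a genuine polynomial) and for s ∈ I set h_{I;s}(x) = ( ∏_{j∈I^c}(x−λⱼ) − ∏_{j∈I^c}(λ_s−λⱼ) ) / (x−λ_s), which is a polynomial since x = λ_s is a root of the numerator. Then the polynomial H_I(x) − Σ_{i∈I} h_{I;i}(x) has degree at most g − 1. -/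
/-!
Write `P = ∏_{j ∈ Iᶜ} (X - λⱼ)`. Every summand of `H_I = Σ_{s ∈ Iᶜ} P / (X - λₛ)` and every
`h_{I;i}` is monic of degree `|Iᶜ| - 1 ≤ g`, so only the coefficient of `X^g` can survive, and only
when `|Iᶜ| = g + 1`. But then `|I| = g + 1 = |Iᶜ|`, and that coefficient is `|Iᶜ| - |I| = 0`.
-/

open Polynomial Finset

namespace Polynomial

variable {R : Type*} [CommRing R]

lemma Monic.coeff_eq_ite {p : R[X]} (hp : p.Monic) {n : ℕ} (hn : p.natDegree ≤ n) :
    p.coeff n = if n = p.natDegree then 1 else 0 := by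
  split_ifs with h
  · rw [h, hp.coeff_natDegree]
  · exact coeff_eq_zero_of_natDegree_lt (lt_of_le_of_ne hn (Ne.symm h))

lemma coeff_sum_of_monic {ι : Type*} {s : Finset ι} {p : ι → R[X]} {d n : ℕ}
    (hp : ∀ i ∈ s, (p i).Monic ∧ (p i).natDegree = d) (hn : d ≤ n) :
    (∑ i ∈ s, p i).coeff n = if n = d then (#s : R) else 0 := by
  rw [finsetSum_coeff, sum_congr rfl fun i hi => (hp i hi).2 ▸ (hp i hi).1.coeff_eq_ite
    ((hp i hi).2 ▸ hn)]
  split_ifs <;> simp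

variable [Nontrivial R]

lemma Monic.sub_C_divByMonic_X_sub_C {p : R[X]} (hp : p.Monic) (hdeg : 0 < p.natDegree)
    (c a : R) :
    ((p - C c) /ₘ (X - C a)).Monic ∧ ((p - C c) /ₘ (X - C a)).natDegree = p.natDegree - 1 := by
  have hpos : 0 < (p - C c).degree := natDegree_pos_iff_degree_pos.mp (by rwa [natDegree_sub_C])
  have hpc : (p - C c).Monic :=
    hp.sub_of_left (degree_C_le.trans_lt (natDegree_pos_iff_degree_pos.mp hdeg))
  refine ⟨?_, by rw [natDegree_divByMonic _ (monic_X_sub_C a), natDegree_sub_C,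
    natDegree_X_sub_C]⟩
  rw [Monic, leadingCoeff_divByMonic_of_monic (monic_X_sub_C a), hpc.leadingCoeff]
  rwa [degree_X_sub_C, Nat.WithBot.one_le_iff_zero_lt]

end Polynomial

theorem stmt4_general (g : ℕ) (lam : Fin (2 * g + 2) → ℂ)
    (I : Finset (Fin (2 * g + 2))) (hI : g + 1 ≤ I.card) :
    ((∑ s ∈ Iᶜ, ∏ j ∈ Iᶜ.erase s, (X - C (lam j))) -
      ∑ i ∈ I, ((∏ j ∈ Iᶜ, (X - C (lam j)) - C (∏ j ∈ Iᶜ, (lam i - lam j)))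
          /ₘ (X - C (lam i)))).degree < (g : WithBot ℕ) := by
  rcases Iᶜ.eq_empty_or_nonempty with hIc | hIc
  · simp [hIc]
  have hcard : #I + #Iᶜ = 2 * g + 2 := by rw [card_add_card_compl, Fintype.card_fin]
  have hH : ∀ s ∈ Iᶜ, (∏ j ∈ Iᶜ.erase s, (X - C (lam j))).Monic ∧
      (∏ j ∈ Iᶜ.erase s, (X - C (lam j))).natDegree = #Iᶜ - 1 := fun s hs =>
    ⟨monic_prod_X_sub_C lam _, by simp [card_erase_of_mem hs]⟩
  have hh : ∀ i ∈ I, _ := fun i _ => by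
    simpa only [natDegree_finsetProd_X_sub_C_eq_card] using
      (monic_prod_X_sub_C lam Iᶜ).sub_C_divByMonic_X_sub_C (by simpa using hIc.card_pos)
        (∏ j ∈ Iᶜ, (lam i - lam j)) (lam i)
  rw [degree_lt_iff_coeff_zero]
  intro n hn
  rw [coeff_sub, coeff_sum_of_monic hH (by omega), coeff_sum_of_monic hh (by omega)]
  split_ifs with hn'
  · have hcard_eq : #Iᶜ = #I := by have := hIc.card_pos; omega
    rw [hcard_eq, sub_self]
  · exact sub_zero 0

theorem stmt4 (g : ℕ) (lam : Fin (2 * g + 2) → ℂ) (hlam : Function.Injective lam)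
    (I : Finset (Fin (2 * g + 2))) (hI : g + 1 ≤ I.card) :
    ((∑ s ∈ Iᶜ, ∏ j ∈ Iᶜ.erase s, (X - C (lam j))) -
      ∑ i ∈ I, ((∏ j ∈ Iᶜ, (X - C (lam j)) - C (∏ j ∈ Iᶜ, (lam i - lam j)))
          /ₘ (X - C (lam i)))).degree < (g : WithBot ℕ) :=
  stmt4_general g lam I hI
end

section
/- Let λ₁, …, λ_n be pairwise distinct complex numbers and let I, J ⊆ {1,…,n} be distinct subsets such that |I \ J| ≤ 1 and |J \ I| ≤ 1. Then the two rational functions G_I(x) = Σ_{k∈I^c} 1/(x−λ_k) − Σ_{i∈I} 1/(x−λᵢ) and G_J(x) = Σ_{k∈J^c} 1/(x−λ_k) − Σ_{j∈J} 1/(x−λⱼ) have no common zero in ℂ \ {λ₁,…,λ_n}. -/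
theorem stmt5 (n : ℕ) (lam : Fin n → ℂ) (hlam : Function.Injective lam)
    (I J : Finset (Fin n)) (hIJ : I ≠ J)
    (hIJ1 : (I \ J).card ≤ 1) (hJI1 : (J \ I).card ≤ 1)
    (x : ℂ) (hx : ∀ k, x ≠ lam k) :
    ¬ ((∑ k ∈ Iᶜ, (x - lam k)⁻¹) - (∑ i ∈ I, (x - lam i)⁻¹) = 0 ∧
       (∑ k ∈ Jᶜ, (x - lam k)⁻¹) - (∑ j ∈ J, (x - lam j)⁻¹) = 0) := by
  rintro ⟨h1, h2⟩
  set f : Fin n → ℂ := fun k => (x - lam k)⁻¹ with hf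
  have hfne : ∀ k, f k ≠ 0 := by
    intro k
    simp only [hf, ne_eq, inv_eq_zero, sub_eq_zero]
    exact hx k
  have hcomp : ∀ S : Finset (Fin n), ∑ k ∈ Sᶜ, f k = ∑ k, f k - ∑ k ∈ S, f k := by
    intro S
    have := Finset.sum_add_sum_compl S f
    linear_combination this
  rw [hcomp] at h1 h2
  have hIJeq : ∑ k ∈ I, f k = ∑ k ∈ J, f k := by linear_combination (h2 - h1) / 2
  have hI : ∑ k ∈ I ∩ J, f k + ∑ k ∈ I \ J, f k = ∑ k ∈ I, f k :=
    Finset.sum_inter_add_sum_sdiff I J f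
  have hJ : ∑ k ∈ J ∩ I, f k + ∑ k ∈ J \ I, f k = ∑ k ∈ J, f k :=
    Finset.sum_inter_add_sum_sdiff J I f
  rw [Finset.inter_comm] at hJ
  have hkey : ∑ k ∈ I \ J, f k = ∑ k ∈ J \ I, f k := by linear_combination hI - hJ + hIJeq
  interval_cases h : (I \ J).card
  · have hIJ0 : I \ J = ∅ := Finset.card_eq_zero.mp h
    interval_cases h' : (J \ I).card
    · have hJI0 : J \ I = ∅ := Finset.card_eq_zero.mp h'
      exact hIJ (Finset.Subset.antisymm (Finset.sdiff_eq_empty_iff_subset.mp hIJ0)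
        (Finset.sdiff_eq_empty_iff_subset.mp hJI0))
    · obtain ⟨b, hb⟩ := Finset.card_eq_one.mp h'
      rw [hIJ0, hb, Finset.sum_empty, Finset.sum_singleton] at hkey
      exact hfne b hkey.symm
  · obtain ⟨a, ha⟩ := Finset.card_eq_one.mp h
    interval_cases h' : (J \ I).card
    · have hJI0 : J \ I = ∅ := Finset.card_eq_zero.mp h'
      rw [hJI0, ha, Finset.sum_empty, Finset.sum_singleton] at hkey
      exact hfne a hkey
    · obtain ⟨b, hb⟩ := Finset.card_eq_one.mp h'
      rw [ha, hb, Finset.sum_singleton, Finset.sum_singleton] at hkey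
      have hab : a ≠ b := by
        intro hEq
        have haI : a ∈ I \ J := ha ▸ Finset.mem_singleton_self a
        have hbJ : b ∈ J \ I := hb ▸ Finset.mem_singleton_self b
        rw [hEq] at haI
        exact (Finset.mem_sdiff.mp hbJ).2 (Finset.mem_sdiff.mp haI).1
      apply hab
      apply hlam
      have h3 := inv_injective hkey
      linear_combination -h3
end

section
/- Let n ≥ 2 and let I, J ⊆ {1,…,n} be distinct subsets with |I ∪ J| ≤ n − 1, and suppose λ_k ∈ ℂ are given, pairwise distinct, for all k ∈ I ∪ J. Then one can choose pairwise distinct values λ_k ∈ ℂ for k ∈ {1,…,n} \ (I ∪ J) (also distinct from the given ones) such that the rational functions G_I(x) = Σ_{k∈I^c} 1/(x−λ_k) − Σ_{i∈I} 1/(x−λᵢ) and G_J(x) = Σ_{k∈J^c} 1/(x−λ_k) − Σ_{j∈J} 1/(x−λⱼ) have no common zero in ℂ \ {λ₁,…,λ_n}. -/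
open Polynomial Finset

lemma ratZeros {ι : Type*} [DecidableEq ι] (A B : Finset ι) (hd : Disjoint A B)
    (μ : ι → ℂ) (hinj : Set.InjOn μ ((A ∪ B : Finset ι) : Set ι)) (hne : (A ∪ B).Nonempty) :
    ∃ Z : Finset ℂ, ∀ x : ℂ, (∀ j ∈ A ∪ B, x ≠ μ j) →
      (∑ k ∈ A, (x - μ k)⁻¹) = (∑ k ∈ B, (x - μ k)⁻¹) → x ∈ Z := by
  classical
  set S := A ∪ B with hS
  set P : Polynomial ℂ :=
    (∑ k ∈ A, ∏ j ∈ S.erase k, (X - C (μ j))) -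
    (∑ k ∈ B, ∏ j ∈ S.erase k, (X - C (μ j))) with hP
  have hprodne : ∀ k₁ ∈ S, (∏ j ∈ S.erase k₁, (μ k₁ - μ j)) ≠ 0 := by
    intro k₁ hk₁
    rw [Finset.prod_ne_zero_iff]
    intro j hj
    have hj' := Finset.mem_erase.1 hj
    exact sub_ne_zero.2 fun e => hj'.1.symm (hinj hk₁ hj'.2 e)
  have hsum_eval : ∀ (T : Finset ι), T ⊆ S → ∀ k₁ ∈ S,
      (∑ k ∈ T, Polynomial.eval (μ k₁) (∏ j ∈ S.erase k, (X - C (μ j)))) =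
        if k₁ ∈ T then ∏ j ∈ S.erase k₁, (μ k₁ - μ j) else 0 := by
    intro T hT k₁ hk₁
    have hz : ∀ k ∈ T, k ≠ k₁ →
        Polynomial.eval (μ k₁) (∏ j ∈ S.erase k, (X - C (μ j))) = 0 := by
      intro k hk hkne
      rw [Polynomial.eval_prod]
      apply Finset.prod_eq_zero (Finset.mem_erase.2 ⟨fun e => hkne e.symm, hk₁⟩)
      simp
    split_ifs with h
    · rw [Finset.sum_eq_single_of_mem k₁ h hz]
      simp [Polynomial.eval_prod]
    · exact Finset.sum_eq_zero fun k hk => hz k hk (fun e => h (e ▸ hk))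
  have hPne : P ≠ 0 := by
    obtain ⟨k₁, hk₁⟩ := hne
    have hev : P.eval (μ k₁) ≠ 0 := by
      rw [hP]
      rw [Polynomial.eval_sub, Polynomial.eval_finset_sum, Polynomial.eval_finset_sum,
        hsum_eval A Finset.subset_union_left k₁ hk₁,
        hsum_eval B Finset.subset_union_right k₁ hk₁]
      rcases Finset.mem_union.1 hk₁ with hA | hB
      · have hB : k₁ ∉ B := Finset.disjoint_left.1 hd hA
        simpa [hA, hB] using hprodne k₁ hk₁
      · have hA : k₁ ∉ A := Finset.disjoint_right.1 hd hB
        have := hprodne k₁ hk₁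
        simp only [hA, hB, if_true, if_false, zero_sub, neg_ne_zero]
        exact this
    exact fun h => hev (by simp [h])
  refine ⟨P.roots.toFinset, ?_⟩
  intro x hx hsum
  have hnz : ∀ j ∈ S, x - μ j ≠ 0 := fun j hj => sub_ne_zero.2 (hx j hj)
  have hterm : ∀ (T : Finset ι), T ⊆ S →
      (∑ k ∈ T, Polynomial.eval x (∏ j ∈ S.erase k, (X - C (μ j)))) =
        (∑ k ∈ T, (x - μ k)⁻¹) * ∏ j ∈ S, (x - μ j) := by
    intro T hT
    rw [Finset.sum_mul]
    refine Finset.sum_congr rfl fun k hk => ?_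
    rw [Polynomial.eval_prod]
    rw [← Finset.mul_prod_erase S _ (hT hk)]
    rw [inv_mul_cancel_left₀ (hnz k (hT hk))]
    simp
  have heval : P.eval x = 0 := by
    rw [hP, Polynomial.eval_sub, Polynomial.eval_finset_sum, Polynomial.eval_finset_sum,
      hterm A Finset.subset_union_left, hterm B Finset.subset_union_right, hsum, sub_self]
  rw [Multiset.mem_toFinset, Polynomial.mem_roots hPne]
  exact heval

open Polynomial Finset

theorem stmt6 (n : ℕ) (hn : 2 ≤ n) (I J : Finset (Fin n)) (hIJ : I ≠ J)
    (hcard : (I ∪ J).card ≤ n - 1)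
    (μ : Fin n → ℂ) (hμ : Set.InjOn μ (I ∪ J : Finset (Fin n))) :
    ∃ lam : Fin n → ℂ, Function.Injective lam ∧
      (∀ k ∈ I ∪ J, lam k = μ k) ∧
      ∀ x : ℂ, (∀ k, x ≠ lam k) →
        ¬ ((∑ k ∈ Iᶜ, (x - lam k)⁻¹) - (∑ i ∈ I, (x - lam i)⁻¹) = 0 ∧
           (∑ k ∈ Jᶜ, (x - lam k)⁻¹) - (∑ j ∈ J, (x - lam j)⁻¹) = 0) := by
  classical
  set D := I ∪ J with hD
  -- extend μ to an injective function lam₀ on Fin n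
  have hMfin : ((↑(D.image μ) : Set ℂ)).Finite := (D.image μ).finite_toSet
  have hinfc : ((↑(D.image μ) : Set ℂ))ᶜ.Infinite := hMfin.infinite_compl
  have : Infinite ((↑(D.image μ) : Set ℂ)ᶜ : Set ℂ) := hinfc.to_subtype
  let emb : ℕ ↪ ((↑(D.image μ) : Set ℂ)ᶜ : Set ℂ) := Infinite.natEmbedding _
  set lam₀ : Fin n → ℂ := fun k => if k ∈ D then μ k else (emb k.1 : ℂ) with hlam₀
  have hlam₀D : ∀ k ∈ D, lam₀ k = μ k := fun k hk => by simp [hlam₀, hk]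
  have hembout : ∀ (m : ℕ), (emb m : ℂ) ∉ (↑(D.image μ) : Set ℂ) := fun m => (emb m).2
  have hlam₀inj : Function.Injective lam₀ := by
    intro a b hab
    by_cases ha : a ∈ D <;> by_cases hb : b ∈ D <;> simp only [hlam₀, ha, hb, if_true, if_false] at hab
    · exact hμ (by simpa using ha) (by simpa using hb) hab
    · exact absurd (hab ▸ Finset.mem_coe.2 (Finset.mem_image_of_mem μ ha)) (hembout b.1)
    · exact absurd (hab ▸ Finset.mem_coe.2 (Finset.mem_image_of_mem μ hb)) (hembout a.1)
    · exact Fin.ext (emb.injective (Subtype.coe_injective hab))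
  -- a free index
  have hFne : Dᶜ.Nonempty := by
    rw [← Finset.card_pos, Finset.card_compl, Fintype.card_fin]
    omega
  obtain ⟨k₀, hk₀⟩ := hFne
  have hk₀D : k₀ ∉ D := Finset.mem_compl.1 hk₀
  -- difference sets
  set A := J \ I with hA
  set B := I \ J with hB
  have hABd : Disjoint A B := disjoint_sdiff_sdiff
  have hABsub : A ∪ B ⊆ D := by
    intro k hk
    rcases Finset.mem_union.1 hk with h | h
    · exact Finset.mem_union_right _ (Finset.mem_sdiff.1 h).1
    · exact Finset.mem_union_left _ (Finset.mem_sdiff.1 h).1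
  have hABne : (A ∪ B).Nonempty := by
    rw [Finset.nonempty_iff_ne_empty]
    intro h
    rw [Finset.union_eq_empty, Finset.sdiff_eq_empty_iff_subset,
      Finset.sdiff_eq_empty_iff_subset] at h
    exact hIJ (Finset.Subset.antisymm h.2 h.1)
  obtain ⟨Z, hZ⟩ := ratZeros A B hABd μ (hμ.mono (by exact_mod_cast hABsub)) hABne
  -- choose generic t
  set g : ℂ → ℂ := fun x => (∑ i ∈ I, (x - lam₀ i)⁻¹) - (∑ k ∈ A, (x - lam₀ k)⁻¹)
      - ∑ k ∈ Dᶜ.erase k₀, (x - lam₀ k)⁻¹ with hg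
  set Bad : Finset ℂ := (Finset.univ.image lam₀) ∪ Z.image (fun z => z - (g z)⁻¹) with hBad
  obtain ⟨t, ht⟩ := Infinite.exists_notMem_finset Bad
  have htlam₀ : ∀ k, t ≠ lam₀ k := by
    intro k he
    exact ht (Finset.mem_union_left _ (Finset.mem_image.2 ⟨k, Finset.mem_univ k, he.symm⟩))
  set lam : Fin n → ℂ := Function.update lam₀ k₀ t with hlam
  have hlamne : ∀ k, k ≠ k₀ → lam k = lam₀ k := fun k hk => Function.update_of_ne hk _ _
  have hlamk₀ : lam k₀ = t := Function.update_self _ _ _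
  have hlaminj : Function.Injective lam := by
    intro a b hab
    by_cases ha : a = k₀ <;> by_cases hb : b = k₀
    · rw [ha, hb]
    · rw [ha, hlamk₀] at hab; rw [hlamne b hb] at hab; exact absurd hab (htlam₀ b)
    · rw [hb, hlamk₀] at hab; rw [hlamne a ha] at hab; exact absurd hab.symm (htlam₀ a)
    · rw [hlamne a ha, hlamne b hb] at hab; exact hlam₀inj hab
  have hlamD : ∀ k ∈ I ∪ J, lam k = μ k := by
    intro k hk
    rw [hlamne k (fun e => hk₀D (e ▸ hk)), hlam₀D k hk]
  refine ⟨lam, hlaminj, hlamD, ?_⟩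
  intro x hx ⟨h1, h2⟩
  have hxne : ∀ k, x - lam k ≠ 0 := fun k => sub_ne_zero.2 (hx k)
  have hI' : (∑ k ∈ Iᶜ, (x - lam k)⁻¹) = ∑ i ∈ I, (x - lam i)⁻¹ := sub_eq_zero.1 h1
  have hJ' : (∑ k ∈ Jᶜ, (x - lam k)⁻¹) = ∑ j ∈ J, (x - lam j)⁻¹ := sub_eq_zero.1 h2
  have htotI := Finset.sum_compl_add_sum I (fun k => (x - lam k)⁻¹)
  have htotJ := Finset.sum_compl_add_sum J (fun k => (x - lam k)⁻¹)
  have hIJsum : (∑ i ∈ I, (x - lam i)⁻¹) = ∑ j ∈ J, (x - lam j)⁻¹ := by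
    have h2I : (2 : ℂ) * ∑ i ∈ I, (x - lam i)⁻¹ = ∑ k, (x - lam k)⁻¹ := by
      rw [← htotI, hI']; ring
    have h2J : (2 : ℂ) * ∑ j ∈ J, (x - lam j)⁻¹ = ∑ k, (x - lam k)⁻¹ := by
      rw [← htotJ, hJ']; ring
    exact mul_left_cancel₀ two_ne_zero (h2I.trans h2J.symm)
  -- deduce sum over A equals sum over B
  have hsplitI := Finset.sum_sdiff (Finset.inter_subset_left (s₁ := I) (s₂ := J))
      (f := fun k => (x - lam k)⁻¹)
  have hsplitJ := Finset.sum_sdiff (Finset.inter_subset_left (s₁ := J) (s₂ := I))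
      (f := fun k => (x - lam k)⁻¹)
  have hABsum : (∑ k ∈ A, (x - lam k)⁻¹) = ∑ k ∈ B, (x - lam k)⁻¹ := by
    rw [Finset.sdiff_inter_self_left] at hsplitI hsplitJ
    have hic : J ∩ I = I ∩ J := Finset.inter_comm _ _
    rw [hic] at hsplitJ
    have : (∑ k ∈ I \ J, (x - lam k)⁻¹) = ∑ k ∈ J \ I, (x - lam k)⁻¹ := by
      have := hsplitI.trans (hIJsum.trans hsplitJ.symm)
      linear_combination this
    rw [hA, hB, this]
  have hlamAB : ∀ k ∈ A ∪ B, lam k = μ k := fun k hk => hlamD k (hABsub hk)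
  have hxZ : x ∈ Z := by
    apply hZ x
    · intro j hj
      rw [← hlamAB j hj]; exact hx j
    · calc (∑ k ∈ A, (x - μ k)⁻¹) = ∑ k ∈ A, (x - lam k)⁻¹ :=
            Finset.sum_congr rfl fun k hk => by rw [hlamAB k (Finset.mem_union_left _ hk)]
        _ = ∑ k ∈ B, (x - lam k)⁻¹ := hABsum
        _ = ∑ k ∈ B, (x - μ k)⁻¹ :=
            Finset.sum_congr rfl fun k hk => by rw [hlamAB k (Finset.mem_union_right _ hk)]
  -- decompose Iᶜ = Dᶜ ∪ A
  have hIc : Iᶜ = Dᶜ ∪ A := by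
    ext k
    simp only [Finset.mem_compl, Finset.mem_union, Finset.mem_sdiff, hD, hA]
    tauto
  have hdisj : Disjoint Dᶜ A := by
    rw [Finset.disjoint_left]
    intro k hk hkA
    exact (Finset.mem_compl.1 hk) (hABsub (Finset.mem_union_left _ hkA))
  have hIcsum : (∑ k ∈ Dᶜ, (x - lam k)⁻¹) + (∑ k ∈ A, (x - lam k)⁻¹)
      = ∑ i ∈ I, (x - lam i)⁻¹ := by
    rw [← Finset.sum_union hdisj, ← hIc]; exact hI'
  have hDcsum : (∑ k ∈ Dᶜ.erase k₀, (x - lam k)⁻¹) + (x - lam k₀)⁻¹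
      = ∑ k ∈ Dᶜ, (x - lam k)⁻¹ := Finset.sum_erase_add _ _ hk₀
  -- compute (x - t)⁻¹ = g x
  have hErase : (∑ k ∈ Dᶜ.erase k₀, (x - lam k)⁻¹) = ∑ k ∈ Dᶜ.erase k₀, (x - lam₀ k)⁻¹ :=
    Finset.sum_congr rfl fun k hk => by rw [hlamne k (Finset.mem_erase.1 hk).1]
  have hIsum0 : (∑ i ∈ I, (x - lam i)⁻¹) = ∑ i ∈ I, (x - lam₀ i)⁻¹ :=
    Finset.sum_congr rfl fun k hk => by
      rw [hlamne k (fun e => hk₀D (e ▸ Finset.mem_union_left _ hk))]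
  have hAsum0 : (∑ k ∈ A, (x - lam k)⁻¹) = ∑ k ∈ A, (x - lam₀ k)⁻¹ :=
    Finset.sum_congr rfl fun k hk => by
      rw [hlamne k (fun e => hk₀D (e ▸ hABsub (Finset.mem_union_left _ hk)))]
  have hteq : (x - t)⁻¹ = g x := by
    simp only [hg]
    rw [← hlamk₀, ← hIsum0, ← hAsum0, ← hErase]
    linear_combination hIcsum + hDcsum
  have hgx : g x ≠ 0 := by
    rw [← hteq]
    exact inv_ne_zero (hlamk₀ ▸ hxne k₀)
  have htval : t = x - (g x)⁻¹ := by
    have : (g x)⁻¹ = x - t := by rw [← hteq, inv_inv]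
    rw [this]; ring
  exact ht (Finset.mem_union_right _ (Finset.mem_image.2 ⟨x, hxZ, htval.symm⟩))
end

section
/- Let P be a meromorphic function on ℂ satisfying the differential equation (P′)² = 4(P−e₁)(P−e₂)(P−e₃) with e₁, e₂, e₃ ∈ ℂ, and suppose P takes infinitely many values. Let α ≠ 0, a₀, b₀, c₀, d₀, a₁, b₁, c₁, d₁, p ∈ ℂ and suppose the identity 16·[(a₀a₁+b₀b₁+c₀c₁+d₀d₁) + α(a₁−ib₁)P]²·(P−e₁)(P−e₂)(P−e₃) = [ ((a₀²+b₀²+c₀²+d₀²) + 2α(a₀−ib₀)P)·(P−p)² + 2((a₀a₁+b₀b₁+c₀c₁+d₀d₁) + α(a₁−ib₁)P)·(q + r(P−p)) ]² holds identically in P (as polynomials in one variable P), where q, r ∈ ℂ and (e₁,e₂,e₃,p) are such that (P−e₁)(P−e₂)(P−e₃) is a cubic with distinct roots. Then a₀ − ib₀ = 0, a₁ − ib₁ = 0, c₀c₁ + d₀d₁ = 0, and c₀² + d₀² = 0. -/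
open Polynomial

lemma aux_root (A B e f g : ℂ) (hef : e ≠ f) (heg : e ≠ g) (F : Polynomial ℂ)
    (h : (16 : Polynomial ℂ) * (C A + C B * X) ^ 2 *
        ((X - C e) * (X - C f) * (X - C g)) = F ^ 2) :
    A + B * e = 0 := by
  have hroot : F.eval e = 0 := by
    have h0 := congrArg (Polynomial.eval e) h
    simp at h0
    have : F.eval e ^ 2 = 0 := by
      rw [← eval_pow, ← h]
      simp
    exact pow_eq_zero_iff two_ne_zero |>.mp this
  have hdvd : (X - C e) ∣ F := dvd_iff_isRoot.mpr hroot
  have h2 : (X - C e) * (X - C e) ∣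
      (X - C e) * ((16 : Polynomial ℂ) * (C A + C B * X) ^ 2 * ((X - C f) * (X - C g))) := by
    rw [show (X - C e) * ((16 : Polynomial ℂ) * (C A + C B * X) ^ 2 * ((X - C f) * (X - C g)))
        = (16 : Polynomial ℂ) * (C A + C B * X) ^ 2 * ((X - C e) * (X - C f) * (X - C g)) from by
      ring, h, sq]
    exact mul_dvd_mul hdvd hdvd
  have h3 : (X - C e) ∣ (16 : Polynomial ℂ) * (C A + C B * X) ^ 2 * ((X - C f) * (X - C g)) :=
    (mul_dvd_mul_iff_left (X_sub_C_ne_zero e)).mp h2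
  have h4 : ((16 : Polynomial ℂ) * (C A + C B * X) ^ 2 * ((X - C f) * (X - C g))).eval e = 0 :=
    dvd_iff_isRoot.mp h3
  simp at h4
  have hf : e - f ≠ 0 := sub_ne_zero.mpr hef
  have hg : e - g ≠ 0 := sub_ne_zero.mpr heg
  rcases h4 with h' | h' | h'
  · exact h'
  · exact absurd h' hf
  · exact absurd h' hg

theorem stmt9 (e₁ e₂ e₃ p q r α a₀ b₀ c₀ d₀ a₁ b₁ c₁ d₁ : ℂ)
    (hα : α ≠ 0) (h12 : e₁ ≠ e₂) (h13 : e₁ ≠ e₃) (h23 : e₂ ≠ e₃)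
    (h : (16 : Polynomial ℂ) *
        (C (a₀ * a₁ + b₀ * b₁ + c₀ * c₁ + d₀ * d₁) +
          C (α * (a₁ - Complex.I * b₁)) * X) ^ 2 *
        ((X - C e₁) * (X - C e₂) * (X - C e₃))
        =
        ((C (a₀ ^ 2 + b₀ ^ 2 + c₀ ^ 2 + d₀ ^ 2) +
            C (2 * α * (a₀ - Complex.I * b₀)) * X) * (X - C p) ^ 2 +
          2 * (C (a₀ * a₁ + b₀ * b₁ + c₀ * c₁ + d₀ * d₁) +
            C (α * (a₁ - Complex.I * b₁)) * X) *
            (C q + C r * (X - C p))) ^ 2) :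
    a₀ - Complex.I * b₀ = 0 ∧ a₁ - Complex.I * b₁ = 0 ∧
      c₀ * c₁ + d₀ * d₁ = 0 ∧ c₀ ^ 2 + d₀ ^ 2 = 0 := by
  set A := a₀ * a₁ + b₀ * b₁ + c₀ * c₁ + d₀ * d₁ with hAdef
  set B := α * (a₁ - Complex.I * b₁) with hBdef
  set S := a₀ ^ 2 + b₀ ^ 2 + c₀ ^ 2 + d₀ ^ 2 with hSdef
  set T := 2 * α * (a₀ - Complex.I * b₀) with hTdef
  have hL1 : A + B * e₁ = 0 := aux_root A B e₁ e₂ e₃ h12 h13 _ h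
  have hL2 : A + B * e₂ = 0 := aux_root A B e₂ e₁ e₃ h12.symm h23 _ (by rw [← h]; ring)
  have hBe : B * (e₁ - e₂) = 0 := by linear_combination hL1 - hL2
  have hB : B = 0 := by
    rcases mul_eq_zero.mp hBe with h' | h'
    · exact h'
    · exact absurd h' (sub_ne_zero.mpr h12)
  have ha1 : a₁ - Complex.I * b₁ = 0 := by
    rcases mul_eq_zero.mp (hBdef ▸ hB) with h' | h'
    · exact absurd h' hα
    · exact h'
  have hA : A = 0 := by linear_combination hL1 - e₁ * hB
  have hCA : (C A : Polynomial ℂ) = 0 := by rw [hA, map_zero]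
  have hCB : (C B : Polynomial ℂ) = 0 := by rw [hB, map_zero]
  rw [hCA, hCB] at h
  have hz : ((C S + C T * X) * (X - C p) ^ 2) ^ 2 = 0 := by
    linear_combination -h
  have hF0 : (C S + C T * X) * (X - C p) ^ 2 = 0 :=
    pow_eq_zero_iff two_ne_zero |>.mp hz
  have hlin : (C S + C T * X : Polynomial ℂ) = 0 := by
    rcases mul_eq_zero.mp hF0 with h' | h'
    · exact h'
    · exact absurd h' (pow_ne_zero _ (X_sub_C_ne_zero p))
  have hS0 : S = 0 := by
    have := congrArg (Polynomial.eval 0) hlin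
    simpa using this
  have hT0 : T = 0 := by
    have := congrArg (Polynomial.eval 1) hlin
    simp at this
    linear_combination this - hS0
  have ha0 : a₀ - Complex.I * b₀ = 0 := by
    have h2α : 2 * α ≠ 0 := by
      simp [hα]
    rcases mul_eq_zero.mp (hTdef ▸ hT0) with h' | h'
    · exact absurd h' h2α
    · exact h'
  have hI : Complex.I ^ 2 = -1 := Complex.I_sq
  refine ⟨ha0, ha1, ?_, ?_⟩
  · linear_combination hA - a₁ * ha0 - Complex.I * b₀ * ha1 - b₀ * b₁ * hI
  · linear_combination hS0 - (a₀ + Complex.I * b₀) * ha0 - b₀ ^ 2 * hI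
end

section
/- Let λ₁,…,λ_{2g+2} be pairwise distinct complex numbers and let I, J ⊆ {1,…,2g+2} with I ≠ J, g+1 ≤ |I|, |J| ≤ g+2, such that either (|I| = |J| and |I∩J| ≥ |I|−1) or (J ⊂ I, |I| = g+2, |J| = g+1). Then on any branch of y = √(∏ⱼ(x−λⱼ)) away from all λ_k, the derivatives of f_I = y/∏_{i∈I}(x−λᵢ) and f_J = y/∏_{j∈J}(x−λⱼ) have no common zero. -/
theorem stmt17 (g : ℕ) (lam : Fin (2 * g + 2) → ℂ) (hlam : Function.Injective lam)
    (I J : Finset (Fin (2 * g + 2))) (hIJ : I ≠ J)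
    (hcond : (I.card = J.card ∧ g + 1 ≤ I.card ∧ I.card ≤ g + 2 ∧
                I.card - 1 ≤ (I ∩ J).card) ∨
             (J ⊂ I ∧ I.card = g + 2 ∧ J.card = g + 1))
    (U : Set ℂ) (hU : IsOpen U) (y : ℂ → ℂ)
    (hy : DifferentiableOn ℂ y U)
    (hsq : ∀ x ∈ U, (y x) ^ 2 = ∏ j, (x - lam j))
    (x : ℂ) (hx : x ∈ U) (hxl : ∀ k, x ≠ lam k) :
    ¬ (deriv (fun x => y x / ∏ i ∈ I, (x - lam i)) x = 0 ∧
       deriv (fun x => y x / ∏ j ∈ J, (x - lam j)) x = 0) := by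
  rintro ⟨hdI, hdJ⟩
  have hne : ∀ k, x - lam k ≠ 0 := fun k => sub_ne_zero.mpr (hxl k)
  have hyne : y x ≠ 0 := by
    have h2 : (y x) ^ 2 ≠ 0 := by
      rw [hsq x hx]
      exact Finset.prod_ne_zero_iff.mpr fun j _ => hne j
    exact fun h => h2 (by simp [h])
  have hydiff : DifferentiableAt ℂ y x := hy.differentiableAt (hU.mem_nhds hx)
  -- Key: if deriv (y / P_K) x = 0 then deriv y x = y x * ∑_{k∈K} (x - lam k)⁻¹
  have key : ∀ K : Finset (Fin (2 * g + 2)),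
      deriv (fun x => y x / ∏ i ∈ K, (x - lam i)) x = 0 →
      deriv y x = y x * ∑ i ∈ K, (x - lam i)⁻¹ := by
    intro K hK
    have hPd : HasDerivAt (fun x => ∏ i ∈ K, (x - lam i))
        (∑ i ∈ K, ∏ j ∈ K.erase i, (x - lam j)) x := by
      simpa using HasDerivAt.fun_finsetProd
        (fun i (_ : i ∈ K) => (hasDerivAt_id x).sub_const (lam i))
    have hPne : (∏ i ∈ K, (x - lam i)) ≠ 0 :=
      Finset.prod_ne_zero_iff.mpr fun j _ => hne j
    have hD : (∑ i ∈ K, ∏ j ∈ K.erase i, (x - lam j))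
        = (∏ i ∈ K, (x - lam i)) * ∑ i ∈ K, (x - lam i)⁻¹ := by
      rw [Finset.mul_sum]
      refine Finset.sum_congr rfl fun i hi => ?_
      rw [eq_comm, mul_inv_eq_iff_eq_mul₀ (hne i)]
      exact (Finset.prod_erase_mul K (fun j => x - lam j) hi).symm
    rw [deriv_fun_div hydiff (HasDerivAt.differentiableAt hPd) hPne, hPd.deriv, hD,
      div_eq_zero_iff] at hK
    rcases hK with hK | hK
    · have h2 : (deriv y x - y x * ∑ i ∈ K, (x - lam i)⁻¹) * ∏ i ∈ K, (x - lam i) = 0 := by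
        linear_combination hK
      rcases mul_eq_zero.mp h2 with h | h
      · linear_combination h
      · exact absurd h hPne
    · exact absurd (pow_eq_zero_iff (by norm_num) |>.mp hK) hPne
  have hSIJ : (∑ i ∈ I, (x - lam i)⁻¹) = ∑ i ∈ J, (x - lam i)⁻¹ :=
    mul_left_cancel₀ hyne ((key I hdI).symm.trans (key J hdJ))
  -- reduce to sums over the symmetric difference parts
  have hsplitI := Finset.sum_inter_add_sum_sdiff I J (fun i => (x - lam i)⁻¹)
  have hsplitJ := Finset.sum_inter_add_sum_sdiff J I (fun i => (x - lam i)⁻¹)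
  rw [Finset.inter_comm J I] at hsplitJ
  have hdiff : (∑ i ∈ I \ J, (x - lam i)⁻¹) = ∑ i ∈ J \ I, (x - lam i)⁻¹ := by
    have := hsplitI.trans (hSIJ.trans hsplitJ.symm)
    linear_combination this
  have hcardIJ : (I \ J).card = I.card - (I ∩ J).card := by
    rw [← Finset.sdiff_inter_self_left]
    exact Finset.card_sdiff_of_subset Finset.inter_subset_left
  rcases hcond with ⟨hc1, _, _, hc4⟩ | ⟨hJI, hcI, hcJ⟩
  · -- symmetric case: |I\J| = |J\I| = 1
    have hIcapne : I ∩ J ≠ I := by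
      intro h
      exact hIJ (Finset.eq_of_subset_of_card_le
        (by rw [← h]; exact Finset.inter_subset_right) (le_of_eq hc1.symm))
    have hlt : (I ∩ J).card < I.card :=
      lt_of_le_of_ne (Finset.card_le_card Finset.inter_subset_left)
        (fun h => hIcapne (Finset.eq_of_subset_of_card_le Finset.inter_subset_left h.ge))
    have hcap : (I ∩ J).card = I.card - 1 := le_antisymm (Nat.le_sub_one_of_lt hlt) hc4
    have hc1' : (I \ J).card = 1 := by omega
    have hc2' : (J \ I).card = 1 := by
      have h5 : (J \ I).card = J.card - (J ∩ I).card := by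
        rw [← Finset.sdiff_inter_self_left]
        exact Finset.card_sdiff_of_subset Finset.inter_subset_left
      rw [Finset.inter_comm] at h5
      omega
    obtain ⟨a, ha⟩ := Finset.card_eq_one.mp hc1'
    obtain ⟨b, hb⟩ := Finset.card_eq_one.mp hc2'
    rw [ha, hb, Finset.sum_singleton, Finset.sum_singleton] at hdiff
    have hab : a ≠ b := by
      intro h
      have haI : a ∈ I \ J := ha ▸ Finset.mem_singleton_self a
      have hbJ : b ∈ J \ I := hb ▸ Finset.mem_singleton_self b
      rw [← h] at hbJ
      exact (Finset.mem_sdiff.mp haI).2 (Finset.mem_sdiff.mp hbJ).1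
    exact hab (hlam (by linear_combination -inv_injective hdiff))
  · -- J ⊂ I case
    have hJIe : J \ I = ∅ := Finset.sdiff_eq_empty_iff_subset.mpr hJI.subset
    have hcap : I ∩ J = J := Finset.inter_eq_right.mpr hJI.subset
    have hc1' : (I \ J).card = 1 := by rw [hcardIJ, hcap]; omega
    obtain ⟨a, ha⟩ := Finset.card_eq_one.mp hc1'
    rw [ha, hJIe, Finset.sum_singleton, Finset.sum_empty] at hdiff
    exact inv_ne_zero (hne a) hdiff
end
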